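/- arXiv:1808.04817 — 2 statements merged into one kernel-verified Lean document; each statement's English description precedes it below -/
import Mathlib

section
/- Let n ≥ 1 and let z₀, z₁, …, z_n, w₁, …, w_n ∈ 𝔻 satisfy d(z_k, w_k) ≤ (1 − d(z_k, z₀))(1 − d(w_k, z₀))/(4n) for k = 1,…,n, where d is the pseudo-hyperbolic distance. Then the function f(ζ) = ∏_{k=0}^{n} (ζ − z_k)/(1 − conj(z_k) ζ) · (∏_{k=1}^{n} (ζ − w_k)/(1 − conj(w_k) ζ))^{−1} restricted to 𝕋 is a sense-preserving circle homeomorphism. Furthermore, if the inequality is strict for some k, then f is a circle diffeomorphism. -/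
open Complex MeasureTheory intervalIntegral ComplexConjugate

/-- A sense-preserving homeomorphism of the unit circle, described via a continuous
strictly increasing degree-one lift. -/
def CirclePosHomeo (f : ℂ → ℂ) : Prop :=
  ∃ F : ℝ → ℝ, Continuous F ∧ StrictMono F ∧
    (∀ θ, F (θ + 2 * Real.pi) = F θ + 2 * Real.pi) ∧
    ∀ θ : ℝ, f (Complex.exp (θ * Complex.I)) = Complex.exp (F θ * Complex.I)

/-- A sense-preserving diffeomorphism of the unit circle, described via a `C¹`
degree-one lift with everywhere positive derivative. -/
def CirclePosDiffeo (f : ℂ → ℂ) : Prop :=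
  ∃ F : ℝ → ℝ, ContDiff ℝ 1 F ∧ (∀ θ, 0 < deriv F θ) ∧
    (∀ θ, F (θ + 2 * Real.pi) = F θ + 2 * Real.pi) ∧
    ∀ θ : ℝ, f (Complex.exp (θ * Complex.I)) = Complex.exp (F θ * Complex.I)

/-- The pseudo-hyperbolic distance on the unit disk. -/
noncomputable def pseudoDist (z w : ℂ) : ℝ := ‖(z - w) / (1 - z * conj w)‖

/-!
On the unit circle the Blaschke factor with zero `a` equals `ζ · conj G / G` with
`G = 1 - conj a · ζ` in the right half-plane, so `β_a(θ) = θ - 2 arg (1 - conj a e^{iθ})` lifts it,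
and `β_a'` is the Poisson kernel `P_a(θ) = (1 - |a|²) / |e^{iθ} - a|²`. The Blaschke quotient
therefore has the degree-one lift `F = ∑ β_{z_k} - ∑ β_{w_k}` with
`F' = P_{z₀} - ∑ₖ (P_{w_k} - P_{z_k})`. Harnack's inequality
`(1 - d(z, w)) P_z ≤ (1 + d(z, w)) P_w`, applied to the pairs `(w_k, z_k)` and `(w_k, z₀)`,
turns the hypothesis into `P_{w_k} - P_{z_k} < P_{z₀} / n`, so `F' > 0`.
-/

section UnitCircle

variable {a ζ : ℂ}

lemma re_one_sub_conj_mul_pos (ha : ‖a‖ < 1) (hζ : ‖ζ‖ = 1) : 0 < (1 - conj a * ζ).re := by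
  have h : (conj a * ζ).re < 1 :=
    calc (conj a * ζ).re ≤ ‖conj a * ζ‖ := re_le_norm _
      _ = ‖a‖ := by rw [norm_mul, RCLike.norm_conj, hζ, mul_one]
      _ < 1 := ha
  simpa using h

lemma mul_conj_one_sub_conj_mul (hζ : ‖ζ‖ = 1) (a : ℂ) : ζ * conj (1 - conj a * ζ) = ζ - a := by
  have hζζ : conj ζ * ζ = 1 := by rw [conj_mul', hζ]; simp
  simp only [map_sub, map_one, map_mul, conj_conj]
  linear_combination -a * hζζ

lemma norm_one_sub_conj_mul (hζ : ‖ζ‖ = 1) (a : ℂ) : ‖1 - conj a * ζ‖ = ‖ζ - a‖ := by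
  rw [← mul_conj_one_sub_conj_mul hζ, norm_mul, hζ, one_mul, RCLike.norm_conj]

lemma norm_sub_pos_of_norm_eq_one (ha : ‖a‖ < 1) (hζ : ‖ζ‖ = 1) : 0 < ‖ζ - a‖ := by
  linarith [norm_sub_norm_le ζ a]

lemma poissonKernel_zero_of_norm_eq_one (hζ : ‖ζ‖ = 1) (a : ℂ) :
    poissonKernel 0 a ζ = (1 - ‖a‖ ^ 2) / ‖ζ - a‖ ^ 2 := by
  simp [poissonKernel, hζ]

lemma poissonKernel_zero_pos (ha : ‖a‖ < 1) (hζ : ‖ζ‖ = 1) : 0 < poissonKernel 0 a ζ := by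
  have : 0 < 1 - ‖a‖ ^ 2 := by nlinarith [norm_nonneg a]
  rw [poissonKernel_zero_of_norm_eq_one hζ]
  exact div_pos this (pow_pos (norm_sub_pos_of_norm_eq_one ha hζ) 2)

end UnitCircle

noncomputable def blaschkeLift (a : ℂ) (θ : ℝ) : ℝ :=
  θ - 2 * arg (1 - conj a * exp (θ * I))

section BlaschkeLift

variable {a : ℂ}

lemma exp_blaschkeLift_mul_I (ha : ‖a‖ < 1) (θ : ℝ) :
    exp (blaschkeLift a θ * I) = (exp (θ * I) - a) / (1 - conj a * exp (θ * I)) := by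
  set ζ := exp (θ * I)
  set G := 1 - conj a * ζ
  have hG : G ≠ 0 := fun h =>
    (re_one_sub_conj_mul_pos ha (norm_exp_ofReal_mul_I θ)).ne' (congrArg re h)
  have hpolar : (‖G‖ : ℂ) * exp (arg G * I) = G := norm_mul_exp_arg_mul_I G
  have hnorm : (‖G‖ : ℂ) ^ 2 = G * conj G := (mul_conj' G).symm
  have hsplit : exp (blaschkeLift a θ * I) * exp (arg G * I) ^ 2 = ζ := by
    rw [← exp_nat_mul, ← exp_add]
    congr 1
    simp only [blaschkeLift]
    push_cast
    ring
  rw [← mul_conj_one_sub_conj_mul (norm_exp_ofReal_mul_I θ) a, eq_div_iff hG]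
  refine mul_left_cancel₀ hG ?_
  linear_combination -exp (blaschkeLift a θ * I) * (G + ‖G‖ * exp (arg G * I)) * hpolar
    + (‖G‖ : ℂ) ^ 2 * hsplit + ζ * hnorm

lemma blaschkeLift_add_two_pi (a : ℂ) (θ : ℝ) :
    blaschkeLift a (θ + 2 * Real.pi) = blaschkeLift a θ + 2 * Real.pi := by
  have h : exp (↑(θ + 2 * Real.pi) * I) = exp (θ * I) := by
    rw [ofReal_add, add_mul, exp_add]
    push_cast
    rw [exp_two_pi_mul_I, mul_one]
  simp only [blaschkeLift, h]
  ring

lemma hasDerivAt_blaschkeLift (ha : ‖a‖ < 1) (θ : ℝ) :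
    HasDerivAt (blaschkeLift a) (poissonKernel 0 a (exp (θ * I))) θ := by
  set ζ := exp (θ * I)
  have hζ : ‖ζ‖ = 1 := norm_exp_ofReal_mul_I θ
  have hre := re_one_sub_conj_mul_pos ha hζ
  have hexp : HasDerivAt (fun t : ℝ => exp (t * I)) (ζ * I) θ := by
    simpa using ((hasDerivAt_id (θ : ℂ)).mul_const I).cexp.comp_ofReal
  have hG : HasDerivAt (fun t : ℝ => 1 - conj a * exp (t * I)) (-(conj a * ζ * I)) θ := by
    simpa [mul_assoc] using (hexp.const_mul (conj a)).const_sub 1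
  have harg : HasDerivAt (fun t : ℝ => (log (1 - conj a * exp (t * I))).im)
      (-(conj a * ζ * I) / (1 - conj a * ζ)).im θ :=
    imCLM.hasFDerivAt.comp_hasDerivAt θ (hG.clog_real (mem_slitPlane_iff.2 (.inl hre)))
  have hlift : blaschkeLift a = fun t : ℝ => t - 2 * (log (1 - conj a * exp (t * I))).im := by
    funext t
    rw [log_im]
    rfl
  rw [hlift]
  refine ((hasDerivAt_id' θ).sub (harg.const_mul 2)).congr_deriv ?_
  have hnormSq : normSq (1 - conj a * ζ) ≠ 0 := (normSq_pos.2 fun h => by simp [h] at hre).ne'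
  have hnorm : ‖a‖ = ‖conj a * ζ‖ := by rw [norm_mul, hζ, mul_one, norm_conj]
  rw [poissonKernel_zero_of_norm_eq_one hζ, ← norm_one_sub_conj_mul hζ, hnorm,
    ← normSq_eq_norm_sq, ← normSq_eq_norm_sq, div_im]
  field_simp
  simp only [normSq_apply, sub_re, sub_im, one_re, one_im, mul_re, mul_im, I_re, I_im, neg_re,
    neg_im]
  ring

lemma continuous_poissonKernel_exp_mul_I (ha : ‖a‖ < 1) :
    Continuous fun θ : ℝ => poissonKernel 0 a (exp (θ * I)) := by
  simp only [poissonKernel_zero_of_norm_eq_one (norm_exp_ofReal_mul_I _)]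
  exact continuous_const.div (by fun_prop) fun θ =>
    (pow_pos (norm_sub_pos_of_norm_eq_one ha (norm_exp_ofReal_mul_I θ)) 2).ne'

end BlaschkeLift

section PseudoDist

variable {z w : ℂ}

lemma norm_one_sub_mul_conj_sq (z w : ℂ) :
    ‖1 - z * conj w‖ ^ 2 = ‖z - w‖ ^ 2 + (1 - ‖z‖ ^ 2) * (1 - ‖w‖ ^ 2) := by
  simp only [Complex.sq_norm, normSq_apply, sub_re, sub_im, one_re, one_im, mul_re, mul_im,
    conj_re, conj_im]
  ring

lemma norm_one_sub_mul_conj_pos (hz : ‖z‖ < 1) (hw : ‖w‖ < 1) : 0 < ‖1 - z * conj w‖ := by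
  have hzw : ‖z * conj w‖ < 1 := by
    rw [norm_mul, norm_conj]
    nlinarith [norm_nonneg z, norm_nonneg w]
  have := norm_sub_norm_le (1 : ℂ) (z * conj w)
  rw [norm_one] at this
  linarith

lemma pseudoDist_nonneg (z w : ℂ) : 0 ≤ pseudoDist z w := norm_nonneg _

lemma pseudoDist_comm (z w : ℂ) : pseudoDist z w = pseudoDist w z := by
  have : 1 - w * conj z = conj (1 - z * conj w) := by simp [mul_comm]
  rw [pseudoDist, pseudoDist, norm_div, norm_div, this, norm_conj, norm_sub_rev]

lemma pseudoDist_mul_norm_one_sub_mul_conj (hz : ‖z‖ < 1) (hw : ‖w‖ < 1) :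
    pseudoDist z w * ‖1 - z * conj w‖ = ‖z - w‖ := by
  rw [pseudoDist, norm_div, div_mul_cancel₀ _ (norm_one_sub_mul_conj_pos hz hw).ne']

lemma pseudoDist_lt_one (hz : ‖z‖ < 1) (hw : ‖w‖ < 1) : pseudoDist z w < 1 := by
  have : 0 < (1 - ‖z‖ ^ 2) * (1 - ‖w‖ ^ 2) := by
    apply mul_pos <;> nlinarith [norm_nonneg z, norm_nonneg w]
  have hD := norm_one_sub_mul_conj_pos hz hw
  rw [pseudoDist, norm_div, div_lt_one hD]
  nlinarith [norm_one_sub_mul_conj_sq z w, norm_nonneg (z - w)]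

end PseudoDist

section Harnack

variable {z w ζ : ℂ}

lemma norm_sub_mul_le_of_norm_eq_one (hw : ‖w‖ < 1) (hζ : ‖ζ‖ = 1) (z : ℂ) :
    ‖ζ - w‖ * (‖1 - z * conj w‖ - ‖z - w‖) ≤ ‖ζ - z‖ * (1 - ‖w‖ ^ 2) := by
  have hW : ‖(1 : ℂ) - conj w * w‖ = 1 - ‖w‖ ^ 2 := by
    rw [conj_mul', ← ofReal_pow, ← ofReal_one, ← ofReal_sub, norm_real, Real.norm_eq_abs,
      abs_of_pos (by nlinarith [norm_nonneg w])]
  have hsplit : (ζ - z) * (1 - conj w * w) =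
      (ζ - w) * (1 - conj w * z) - (z - w) * (1 - conj w * ζ) := by ring
  have := norm_sub_norm_le ((ζ - w) * (1 - conj w * z)) ((z - w) * (1 - conj w * ζ))
  rw [← hsplit, norm_mul, norm_mul, norm_mul, hW, norm_one_sub_conj_mul hζ, mul_comm (conj w) z]
    at this
  linarith

lemma poissonKernel_harnack (hz : ‖z‖ < 1) (hw : ‖w‖ < 1) (hζ : ‖ζ‖ = 1) :
    (1 - pseudoDist z w) * poissonKernel 0 z ζ ≤ (1 + pseudoDist z w) * poissonKernel 0 w ζ := by
  have hle := norm_sub_mul_le_of_norm_eq_one hw hζ z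
  have hD := norm_one_sub_mul_conj_sq z w
  rw [← pseudoDist_mul_norm_one_sub_mul_conj hz hw] at hle hD
  set d := pseudoDist z w
  set D := ‖1 - z * conj w‖
  have hd0 : 0 ≤ d := pseudoDist_nonneg z w
  have hd1 : d < 1 := pseudoDist_lt_one hz hw
  have hW : 0 < 1 - ‖w‖ ^ 2 := by nlinarith [norm_nonneg w]
  have hqD : 0 ≤ (1 - d) * D * ‖ζ - w‖ := by
    have : 0 ≤ D := norm_nonneg _
    have : 0 ≤ 1 - d := by linarith
    positivity
  have hsq : ((1 - d) * D * ‖ζ - w‖) ^ 2 ≤ (‖ζ - z‖ * (1 - ‖w‖ ^ 2)) ^ 2 :=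
    pow_le_pow_left₀ hqD (by linarith) 2
  have := norm_sub_pos_of_norm_eq_one hz hζ
  have := norm_sub_pos_of_norm_eq_one hw hζ
  rw [poissonKernel_zero_of_norm_eq_one hζ, poissonKernel_zero_of_norm_eq_one hζ,
    mul_div_assoc', mul_div_assoc', div_le_div_iff₀ (by positivity) (by positivity)]
  refine le_of_mul_le_mul_right ?_ hW
  calc (1 - d) * (1 - ‖z‖ ^ 2) * ‖ζ - w‖ ^ 2 * (1 - ‖w‖ ^ 2)
      = (1 + d) * ((1 - d) * D * ‖ζ - w‖) ^ 2 := by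
        linear_combination -(1 - d) * ‖ζ - w‖ ^ 2 * hD
    _ ≤ (1 + d) * (‖ζ - z‖ * (1 - ‖w‖ ^ 2)) ^ 2 := mul_le_mul_of_nonneg_left hsq (by linarith)
    _ = (1 + d) * (1 - ‖w‖ ^ 2) * ‖ζ - z‖ ^ 2 * (1 - ‖w‖ ^ 2) := by ring

end Harnack

lemma poissonKernel_sub_lt_div {z₀ z w ζ : ℂ} (hz₀ : ‖z₀‖ < 1) (hz : ‖z‖ < 1) (hw : ‖w‖ < 1)
    (hζ : ‖ζ‖ = 1) {N : ℝ} (hN : 0 < N)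
    (h : pseudoDist z w ≤ (1 - pseudoDist z z₀) * (1 - pseudoDist w z₀) / (4 * N)) :
    poissonKernel 0 w ζ - poissonKernel 0 z ζ < poissonKernel 0 z₀ ζ / N := by
  set ρ := pseudoDist z w
  set ρ₀ := pseudoDist w z₀
  have hρ : 0 ≤ ρ := pseudoDist_nonneg z w
  have hρ₀ : ρ₀ < 1 := pseudoDist_lt_one hw hz₀
  have hPw := poissonKernel_zero_pos hw hζ
  have hPz₀ := poissonKernel_zero_pos hz₀ hζ
  have hwz : (1 - ρ) * poissonKernel 0 w ζ ≤ (1 + ρ) * poissonKernel 0 z ζ := by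
    simpa only [ρ, pseudoDist_comm z w] using poissonKernel_harnack hw hz hζ
  have hwz₀ : (1 - ρ₀) * poissonKernel 0 w ζ ≤ (1 + ρ₀) * poissonKernel 0 z₀ ζ :=
    poissonKernel_harnack hw hz₀ hζ
  have hρN : 4 * N * ρ ≤ 1 - ρ₀ := by
    rw [le_div_iff₀ (by positivity)] at h
    nlinarith [pseudoDist_nonneg z z₀]
  -- `(1 - ρ) / (1 + ρ) ≥ 1 - 2ρ`
  have hsub : poissonKernel 0 w ζ - poissonKernel 0 z ζ ≤ 2 * ρ * poissonKernel 0 w ζ := by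
    nlinarith [mul_nonneg (mul_nonneg hρ hρ) hPw.le]
  rw [lt_div_iff₀ hN]
  calc (poissonKernel 0 w ζ - poissonKernel 0 z ζ) * N
      ≤ 2 * ρ * poissonKernel 0 w ζ * N := by gcongr
    _ ≤ (1 - ρ₀) / 2 * poissonKernel 0 w ζ := by nlinarith
    _ ≤ (1 + ρ₀) / 2 * poissonKernel 0 z₀ ζ := by linarith
    _ < poissonKernel 0 z₀ ζ := by nlinarith

lemma Fin.sum_lt_of_forall_lt_div {n : ℕ} {f : Fin n → ℝ} {c : ℝ} (hc : 0 < c)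
    (h : ∀ k, f k < c / n) : ∑ k, f k < c := by
  rcases n.eq_zero_or_pos with rfl | hn
  · simpa using hc
  calc ∑ k, f k < ∑ _k : Fin n, c / n :=
        Finset.sum_lt_sum_of_nonempty ⟨⟨0, hn⟩, Finset.mem_univ _⟩ fun k _ => h k
    _ = c := by simp [field]

lemma CirclePosDiffeo.circlePosHomeo {f : ℂ → ℂ} (hf : CirclePosDiffeo f) : CirclePosHomeo f := by
  obtain ⟨F, hF, hF', hper, hexp⟩ := hf
  exact ⟨F, hF.continuous, strictMono_of_deriv_pos hF', hper, hexp⟩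

lemma circlePosDiffeo_of_hasDerivAt {f : ℂ → ℂ} {F K : ℝ → ℝ} (hF : ∀ θ, HasDerivAt F (K θ) θ)
    (hK : Continuous K) (hK_pos : ∀ θ, 0 < K θ)
    (hper : ∀ θ, F (θ + 2 * Real.pi) = F θ + 2 * Real.pi)
    (hf : ∀ θ : ℝ, f (exp (θ * I)) = exp (F θ * I)) : CirclePosDiffeo f := by
  have hderiv : deriv F = K := funext fun θ => (hF θ).deriv
  refine ⟨F, contDiff_one_iff_deriv.2 ⟨fun θ => (hF θ).differentiableAt, hderiv ▸ hK⟩, ?_, hper, hf⟩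
  simpa [hderiv] using hK_pos

theorem circlePosDiffeo_blaschke_quotient {ι κ : Type*} [Fintype ι] [Fintype κ] {z : ι → ℂ}
    {w : κ → ℂ} (hz : ∀ i, ‖z i‖ < 1) (hw : ∀ k, ‖w k‖ < 1)
    (hcard : Fintype.card ι = Fintype.card κ + 1) {f : ℂ → ℂ}
    (hf : ∀ ζ, ‖ζ‖ = 1 → f ζ = (∏ i, (ζ - z i) / (1 - conj (z i) * ζ)) *
      (∏ k, (ζ - w k) / (1 - conj (w k) * ζ))⁻¹)
    (hpos : ∀ ζ, ‖ζ‖ = 1 → ∑ k, poissonKernel 0 (w k) ζ < ∑ i, poissonKernel 0 (z i) ζ) :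
    CirclePosDiffeo f := by
  refine circlePosDiffeo_of_hasDerivAt
    (F := fun θ => ∑ i, blaschkeLift (z i) θ - ∑ k, blaschkeLift (w k) θ)
    (fun θ => (HasDerivAt.fun_sum fun i _ => hasDerivAt_blaschkeLift (hz i) θ).sub
      (HasDerivAt.fun_sum fun k _ => hasDerivAt_blaschkeLift (hw k) θ))
    ((continuous_finsetSum _ fun i _ => continuous_poissonKernel_exp_mul_I (hz i)).sub
      (continuous_finsetSum _ fun k _ => continuous_poissonKernel_exp_mul_I (hw k)))
    (fun θ => sub_pos.2 (hpos _ (norm_exp_ofReal_mul_I θ))) (fun θ => ?_) (fun θ => ?_)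
  · simp only [blaschkeLift_add_two_pi, Finset.sum_add_distrib, Finset.sum_const,
      Finset.card_univ, hcard, nsmul_eq_mul]
    push_cast
    ring
  · rw [hf _ (norm_exp_ofReal_mul_I θ), ofReal_sub, sub_mul, exp_sub, ofReal_sum, ofReal_sum,
      Finset.sum_mul, Finset.sum_mul, exp_sum, exp_sum, div_eq_mul_inv]
    simp only [exp_blaschkeLift_mul_I (hz _), exp_blaschkeLift_mul_I (hw _)]

theorem pseudo_hyperbolic_blaschke_quotient_general
    (n : ℕ) (z : Fin (n + 1) → ℂ) (w : Fin n → ℂ)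
    (hz : ∀ k, ‖z k‖ < 1) (hw : ∀ k, ‖w k‖ < 1)
    (hcond : ∀ k : Fin n, pseudoDist (z k.succ) (w k) ≤
      (1 - pseudoDist (z k.succ) (z 0)) * (1 - pseudoDist (w k) (z 0)) / (4 * n))
    (f : ℂ → ℂ)
    (hf : ∀ ζ : ℂ, f ζ = (∏ k, (ζ - z k) / (1 - conj (z k) * ζ)) *
                         (∏ k, (ζ - w k) / (1 - conj (w k) * ζ))⁻¹) :
    CirclePosHomeo f ∧
    ((∃ k : Fin n, pseudoDist (z k.succ) (w k) <
        (1 - pseudoDist (z k.succ) (z 0)) * (1 - pseudoDist (w k) (z 0)) / (4 * n)) →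
      CirclePosDiffeo f) := by
  have hpos : ∀ ζ, ‖ζ‖ = 1 → ∑ k, poissonKernel 0 (w k) ζ < ∑ k, poissonKernel 0 (z k) ζ := by
    intro ζ hζ
    rw [Fin.sum_univ_succ, ← sub_lt_iff_lt_add, ← Finset.sum_sub_distrib]
    exact Fin.sum_lt_of_forall_lt_div (poissonKernel_zero_pos (hz 0) hζ) fun k =>
      poissonKernel_sub_lt_div (hz 0) (hz k.succ) (hw k) hζ (Nat.cast_pos.2 k.pos) (hcond k)
  have hdiffeo : CirclePosDiffeo f :=
    circlePosDiffeo_blaschke_quotient hz hw (by simp) (fun ζ _ => hf ζ) hpos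
  exact ⟨hdiffeo.circlePosHomeo, fun _ => hdiffeo⟩

/-- if `d(z_k, w_k) ≤ (1 − d(z_k, z₀))(1 − d(w_k, z₀))/(4n)` for
`k = 1,…,n`, then the Blaschke quotient with zeros `z₀,…,z_n` and poles `w₁,…,w_n`
is a circle homeomorphism; if the inequality is strict for some `k`, it is a circle
diffeomorphism. -/
theorem pseudo_hyperbolic_blaschke_quotient
    (n : ℕ) (hn : 1 ≤ n) (z : Fin (n + 1) → ℂ) (w : Fin n → ℂ)
    (hz : ∀ k, ‖z k‖ < 1) (hw : ∀ k, ‖w k‖ < 1)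
    (hcond : ∀ k : Fin n, pseudoDist (z k.succ) (w k) ≤
      (1 - pseudoDist (z k.succ) (z 0)) * (1 - pseudoDist (w k) (z 0)) / (4 * n))
    (f : ℂ → ℂ)
    (hf : ∀ ζ : ℂ, f ζ = (∏ k, (ζ - z k) / (1 - conj (z k) * ζ)) *
                         (∏ k, (ζ - w k) / (1 - conj (w k) * ζ))⁻¹) :
    CirclePosHomeo f ∧
    ((∃ k : Fin n, pseudoDist (z k.succ) (w k) <
        (1 - pseudoDist (z k.succ) (z 0)) * (1 - pseudoDist (w k) (z 0)) / (4 * n)) →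
      CirclePosDiffeo f) :=
  pseudo_hyperbolic_blaschke_quotient_general n z w hz hw hcond f hf
end

section
/- Let z₁, …, z_n ∈ 𝔻 (n ≥ 1) satisfy |z_k| ≤ 1/(4n + 1) for k = 1, …, n. Then the function f(ζ) = ζ^{n+1} ∏_{k=1}^{n} (1 − conj(z_k) ζ)/(ζ − z_k) restricted to 𝕋 is a sense-preserving circle homeomorphism. -/
open Complex MeasureTheory ComplexConjugate

/-!
On the circle, with `w = 1 - conj a * ζ`, the factor `(1 - conj a * ζ) / (ζ - a)` equals
`ζ⁻¹ * w / conj w = exp (i (2 arg w - θ))` for `ζ = exp (i θ)`, and `w` stays in the right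
half-plane. Hence `F θ = θ + 2 ∑ₖ arg (1 - conj zₖ * exp (i θ))` is a continuous lift of `f` of
degree one. The derivative of each `arg` term is bounded by `‖zₖ‖ / (1 - ‖zₖ‖) ≤ 1 / (4n)`,
so `F' ≥ 1 - 2n / (4n) = 1 / 2`, and `F` is strictly increasing.
-/

open scoped Real

theorem CirclePosHomeo.of_hasDerivAt_pos {f : ℂ → ℂ} {F F' : ℝ → ℝ}
    (hF : ∀ θ, HasDerivAt F (F' θ) θ) (hF' : ∀ θ, 0 < F' θ)
    (hperiod : ∀ θ, F (θ + 2 * π) = F θ + 2 * π)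
    (hlift : ∀ θ : ℝ, f (exp (θ * I)) = exp (F θ * I)) :
    CirclePosHomeo f :=
  ⟨F, continuous_iff_continuousAt.2 fun θ => (hF θ).continuousAt,
    strictMono_of_hasDerivAt_pos hF hF', hperiod, hlift⟩

theorem HasDerivAt.arg_real {γ : ℝ → ℂ} {γ' : ℂ} {x : ℝ} (h : HasDerivAt γ γ' x)
    (hx : γ x ∈ slitPlane) : HasDerivAt (fun t => arg (γ t)) (γ' / γ x).im x := by
  simpa [Function.comp_def, log_im] using
    imCLM.hasFDerivAt.comp_hasDerivAt x (h.clog_real hx)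

theorem norm_div_one_sub_le {x : ℂ} (hx : ‖x‖ < 1) : ‖x / (1 - x)‖ ≤ ‖x‖ / (1 - ‖x‖) := by
  have hle : 1 - ‖x‖ ≤ ‖1 - x‖ := by simpa using norm_sub_norm_le (1 : ℂ) x
  rw [norm_div]
  exact div_le_div_of_nonneg_left (norm_nonneg x) (by linarith) hle

theorem div_conj_eq_exp_two_arg {w : ℂ} (hw : w ≠ 0) :
    w / conj w = exp ((2 * arg w : ℝ) * I) := by
  have hnorm : (‖w‖ : ℂ) ≠ 0 := by simpa using hw
  have hconj : conj w = ‖w‖ * exp (-(arg w * I)) := by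
    conv_lhs => rw [← norm_mul_exp_arg_mul_I w]
    rw [map_mul, conj_ofReal, ← exp_conj, map_mul, conj_ofReal, conj_I, mul_neg]
  calc w / conj w = ‖w‖ * exp (arg w * I) / (‖w‖ * exp (-(arg w * I))) := by
        rw [← hconj, norm_mul_exp_arg_mul_I]
    _ = exp ((2 * arg w : ℝ) * I) := by
        rw [mul_div_mul_left _ _ hnorm, ← exp_sub]
        push_cast
        ring_nf

theorem norm_mul_exp_ofReal_mul_I (c : ℂ) (θ : ℝ) : ‖c * exp (θ * I)‖ = ‖c‖ := by
  rw [norm_mul, norm_exp_ofReal_mul_I, mul_one]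

section OneSubMulExp

variable {c : ℂ}

theorem one_sub_mul_exp_mem_slitPlane (hc : ‖c‖ < 1) (θ : ℝ) :
    1 - c * exp (θ * I) ∈ slitPlane := by
  have hre : (c * exp (θ * I)).re < 1 :=
    (re_le_norm _).trans_lt ((norm_mul_exp_ofReal_mul_I c θ).trans_lt hc)
  exact mem_slitPlane_iff.2 (Or.inl (by simpa using hre))

theorem exists_hasDerivAt_arg_one_sub_mul_exp (hc : ‖c‖ < 1) (θ : ℝ) :
    ∃ d, HasDerivAt (fun t : ℝ => arg (1 - c * exp (t * I))) d θ ∧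
      |d| ≤ ‖c‖ / (1 - ‖c‖) := by
  have hexp : HasDerivAt (fun t : ℝ => exp (t * I)) (exp (θ * I) * I) θ := by
    simpa using ((hasDerivAt_id (θ : ℂ)).mul_const I).cexp.comp_ofReal
  refine ⟨_, ((hexp.const_mul c).const_sub 1).arg_real (one_sub_mul_exp_mem_slitPlane hc θ), ?_⟩
  have hd : -(c * (exp (θ * I) * I)) / (1 - c * exp (θ * I))
      = -I * (c * exp (θ * I) / (1 - c * exp (θ * I))) := by ring
  calc |(-(c * (exp (θ * I) * I)) / (1 - c * exp (θ * I))).im|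
      ≤ ‖c * exp (θ * I) / (1 - c * exp (θ * I))‖ := by
        rw [hd]
        simpa using abs_im_le_norm (-I * (c * exp (θ * I) / (1 - c * exp (θ * I))))
    _ ≤ ‖c‖ / (1 - ‖c‖) := by
        simpa [norm_mul_exp_ofReal_mul_I] using
          norm_div_one_sub_le ((norm_mul_exp_ofReal_mul_I c θ).trans_lt hc)

end OneSubMulExp

theorem div_sub_eq_exp_of_norm_lt_one {a : ℂ} (ha : ‖a‖ < 1) (θ : ℝ) :
    (1 - conj a * exp (θ * I)) / (exp (θ * I) - a)
      = exp ((2 * arg (1 - conj a * exp (θ * I)) - θ : ℝ) * I) := by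
  set w := 1 - conj a * exp (θ * I)
  have hw : w ≠ 0 := slitPlane_ne_zero
    (one_sub_mul_exp_mem_slitPlane (by rwa [norm_conj]) θ)
  have hunit : exp (θ * I) * conj (exp (θ * I)) = 1 := by
    rw [mul_conj, normSq_eq_norm_sq, norm_exp_ofReal_mul_I]; norm_num
  have hden : exp (θ * I) - a = exp (θ * I) * conj w := by
    simp only [w, map_sub, map_one, map_mul, conj_conj]
    linear_combination a * hunit
  rw [hden, mul_comm, ← div_div, div_conj_eq_exp_two_arg hw, ← exp_sub]
  push_cast
  ring_nf

theorem div_one_sub_le_of_le {n : ℕ} (hn : 0 < n) {x : ℝ} (hx : x ≤ 1 / (4 * n + 1)) :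
    x / (1 - x) ≤ 1 / 4 / n := by
  have hn' : (0 : ℝ) < n := by exact_mod_cast hn
  have hx' : x * (4 * n + 1) ≤ 1 := (le_div_iff₀ (by positivity)).1 hx
  rw [div_div, div_le_div_iff₀ (by nlinarith) (by positivity)]
  linarith

theorem abs_sum_le_of_forall_abs_le_div_card {ι : Type*} [Fintype ι] {d : ι → ℝ} {C : ℝ}
    (hC : 0 ≤ C) (hd : ∀ i, |d i| ≤ C / Fintype.card ι) : |∑ i, d i| ≤ C := calc
  |∑ i, d i| ≤ ∑ _i : ι, C / Fintype.card ι :=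
    (Finset.abs_sum_le_sum_abs _ _).trans (Finset.sum_le_sum fun i _ => hd i)
  _ ≤ C := by
    rw [Finset.sum_const, Finset.card_univ, nsmul_eq_mul]
    rcases (Fintype.card ι).eq_zero_or_pos with hι | hι
    · simpa [hι] using hC
    · rw [mul_div_cancel₀ _ (by positivity)]

theorem monomial_over_blaschke_circle_homeo_general
    (n : ℕ) (z : Fin n → ℂ)
    (hcond : ∀ k, ‖z k‖ ≤ 1 / (4 * (n : ℝ) + 1))
    (f : ℂ → ℂ)
    (hf : ∀ ζ : ℂ, f ζ = ζ ^ (n + 1) * ∏ k, (1 - conj (z k) * ζ) / (ζ - z k)) :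
    CirclePosHomeo f := by
  have hz : ∀ k, ‖z k‖ < 1 := fun k => (hcond k).trans_lt <|
    (div_lt_one (by positivity)).2 (by linarith [(Nat.cast_pos.2 k.pos : (0 : ℝ) < n)])
  choose d hd hdle using fun k =>
    exists_hasDerivAt_arg_one_sub_mul_exp (c := conj (z k)) (by rw [norm_conj]; exact hz k)
  simp only [norm_conj] at hdle
  have hsum : ∀ θ, |∑ k, d k θ| ≤ 1 / 4 := fun θ =>
    abs_sum_le_of_forall_abs_le_div_card (by norm_num) fun k => by
      rw [Fintype.card_fin]
      exact (hdle k θ).trans (div_one_sub_le_of_le k.pos (hcond k))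
  refine CirclePosHomeo.of_hasDerivAt_pos
    (F := fun θ => θ + 2 * ∑ k, arg (1 - conj (z k) * exp (θ * I)))
    (fun θ => (hasDerivAt_id θ).add ((HasDerivAt.fun_sum fun k _ => hd k θ).const_mul 2))
    (fun θ => by linarith [(abs_le.1 (hsum θ)).1]) (fun θ => ?_) (fun θ => ?_)
  · push_cast
    simp only [exp_mul_I_periodic (θ : ℂ)]
    ring
  · rw [hf, Finset.prod_congr rfl fun k _ => div_sub_eq_exp_of_norm_lt_one (hz k) θ,
      ← exp_nat_mul, ← exp_sum, ← exp_add]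
    push_cast
    rw [← Finset.sum_mul, Finset.sum_sub_distrib, ← Finset.mul_sum]
    simp only [Finset.sum_const, Finset.card_univ, Fintype.card_fin, nsmul_eq_mul]
    congr 1
    ring

/-- if `|z_k| ≤ 1/(4n+1)` for `k = 1,…,n`, then
`ζ ↦ ζ^{n+1} ∏ (1 − conj(z_k) ζ)/(ζ − z_k)` is a circle homeomorphism. -/
theorem monomial_over_blaschke_circle_homeo
    (n : ℕ) (hn : 1 ≤ n) (z : Fin n → ℂ) (hz : ∀ k, ‖z k‖ < 1)
    (hcond : ∀ k, ‖z k‖ ≤ 1 / (4 * (n : ℝ) + 1))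
    (f : ℂ → ℂ)
    (hf : ∀ ζ : ℂ, f ζ = ζ ^ (n + 1) * ∏ k, (1 - conj (z k) * ζ) / (ζ - z k)) :
    CirclePosHomeo f :=
  monomial_over_blaschke_circle_homeo_general n z hcond f hf
end
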